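/- arXiv:1606.04160 — 9 statements merged into one kernel-verified Lean document; each statement's English description precedes it below -/
import Mathlib

section
/- Let m be a natural number, let C, A : Fin m → Bool be two binary attributes of a sample and let Π : Fin m → Prop be a decidable predicate on the indices. Define the conditional contingency counts a := #{i | Π i ∧ A i = false ∧ C i = false}, b := #{i | Π i ∧ A i = false ∧ C i = true}, c := #{i | Π i ∧ A i = true ∧ C i = false}, d := #{i | Π i ∧ A i = true ∧ C i = true}. Then for every integer t with −min(b,c) ≤ t ≤ min(a,d) there exists a permutation σ of Fin m such that the modified sample, in which the attribute A is replaced by A ∘ σ while C and Π are unchanged, has conditional contingency counts exactly (a − t, b + t, c + t, d − t). Moreover, when d > 0 and (d : ℤ) − t > 0, the resulting shift of the count ratio satisfies (b + t)/(d − t) − b/d = ((b + d)/(d − t)) · (t/d) in ℝ. -/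
/-!
For `t ≥ 0` pick `t` indices in the cell `(A, C) = (false, false)` and `t` in the cell
`(true, true)`, and let `σ` swap the two sets; then `A ∘ σ` flips `A` exactly on the chosen
indices, each of which moves to the cell with the other `A`-value and the same `C`-value.
For `t < 0` do the same with the cells `(false, true)` and `(true, false)`.
-/
open Finset Equiv

theorem Finset.exists_perm_swapping_of_card_eq {α : Type*} [DecidableEq α] {s t : Finset α}
    (h : Disjoint s t) (hst : #s = #t) :
    ∃ σ : Perm α, (∀ i ∈ s, σ i ∈ t) ∧ (∀ i ∈ t, σ i ∈ s) ∧ ∀ i ∉ s ∪ t, σ i = i := by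
  let e : s ≃ t := equivOfCardEq hst
  let σ : Perm α := Perm.ofSubtype <|
    (Equiv.Finset.union s t h).permCongr ((sumCongr e e.symm).trans (sumComm t s))
  refine ⟨σ, fun i hi => ?_, fun i hi => ?_, fun i hi => Perm.ofSubtype_apply_of_not_mem _ hi⟩
  · rw [Perm.ofSubtype_apply_of_mem _ (mem_union_left t hi)]
    simp [permCongr_apply, Equiv.Finset.union_symm_left h hi]
  · rw [Perm.ofSubtype_apply_of_mem _ (mem_union_right s hi)]
    simp [permCongr_apply, Equiv.Finset.union_symm_right h hi]

section Contingency

variable {α : Type*} [Fintype α] (P : α → Prop) [DecidablePred P] (C : α → Bool)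

def contingencyCell (A : α → Bool) (x w : Bool) : Finset α :=
  univ.filter fun i => P i ∧ A i = x ∧ C i = w

variable {P C}

theorem mem_contingencyCell {A : α → Bool} {x w : Bool} {i : α} :
    i ∈ contingencyCell P C A x w ↔ P i ∧ A i = x ∧ C i = w := by
  simp [contingencyCell]

variable [DecidableEq α]

theorem card_contingencyCell_of_flip {A A' : α → Bool} {u v : Bool} (huv : u ≠ v)
    {S T : Finset α} (hS : S ⊆ contingencyCell P C A false u)
    (hT : T ⊆ contingencyCell P C A true v) (hA'S : ∀ i ∈ S, A' i = true)
    (hA'T : ∀ i ∈ T, A' i = false) (hA' : ∀ i ∉ S ∪ T, A' i = A i) :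
    #(contingencyCell P C A' false u) + #S = #(contingencyCell P C A false u) ∧
    #(contingencyCell P C A' false v) = #(contingencyCell P C A false v) + #T ∧
    #(contingencyCell P C A' true u) = #(contingencyCell P C A true u) + #S ∧
    #(contingencyCell P C A' true v) + #T = #(contingencyCell P C A true v) := by
  have hS' : ∀ i ∈ S, P i ∧ A i = false ∧ C i = u := fun i hi => mem_contingencyCell.1 (hS hi)
  have hT' : ∀ i ∈ T, P i ∧ A i = true ∧ C i = v := fun i hi => mem_contingencyCell.1 (hT hi)
  refine ⟨?_, ?_, ?_, ?_⟩
  · rw [← card_sdiff_add_card_eq_card hS, show contingencyCell P C A' false u =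
      contingencyCell P C A false u \ S by ext; simp only [mem_contingencyCell, mem_sdiff]; grind]
  · rw [← card_union_of_disjoint, show contingencyCell P C A' false v =
      contingencyCell P C A false v ∪ T by ext; simp only [mem_contingencyCell, mem_union]; grind]
    exact disjoint_left.2 fun i hi hiT => by grind [mem_contingencyCell]
  · rw [← card_union_of_disjoint, show contingencyCell P C A' true u =
      contingencyCell P C A true u ∪ S by ext; simp only [mem_contingencyCell, mem_union]; grind]
    exact disjoint_left.2 fun i hi hiS => by grind [mem_contingencyCell]
  · rw [← card_sdiff_add_card_eq_card hT, show contingencyCell P C A' true v =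
      contingencyCell P C A true v \ T by ext; simp only [mem_contingencyCell, mem_sdiff]; grind]

theorem exists_perm_crossover {A : α → Bool} {u v : Bool} (huv : u ≠ v) {n : ℕ}
    (hnu : n ≤ #(contingencyCell P C A false u)) (hnv : n ≤ #(contingencyCell P C A true v)) :
    ∃ σ : Perm α,
      #(contingencyCell P C (A ∘ σ) false u) + n = #(contingencyCell P C A false u) ∧
      #(contingencyCell P C (A ∘ σ) false v) = #(contingencyCell P C A false v) + n ∧
      #(contingencyCell P C (A ∘ σ) true u) = #(contingencyCell P C A true u) + n ∧
      #(contingencyCell P C (A ∘ σ) true v) + n = #(contingencyCell P C A true v) := by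
  obtain ⟨S, hS, rfl⟩ := exists_subset_card_eq hnu
  obtain ⟨T, hT, hST⟩ := exists_subset_card_eq hnv
  have hdisj : Disjoint S T :=
    disjoint_left.2 fun i hiS hiT => by grind [mem_contingencyCell]
  obtain ⟨σ, hσS, hσT, hσ⟩ := exists_perm_swapping_of_card_eq hdisj hST.symm
  have hcounts := card_contingencyCell_of_flip (A' := A ∘ σ) huv hS hT
    (fun i hi => (mem_contingencyCell.1 (hT (hσS i hi))).2.1)
    (fun i hi => (mem_contingencyCell.1 (hS (hσT i hi))).2.1)
    (fun i hi => congrArg A (hσ i hi))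
  exact ⟨σ, by rwa [hST] at hcounts⟩

end Contingency

/-- Lemma 1 of the paper: shift of odds ratios by a Crossover Process.
Given binary attributes `C, A : Fin m → Bool` and a decidable predicate `P` on indices,
with conditional contingency counts `a, b, c, d`, for every integer `t` with
`-min b c ≤ t ≤ min a d` there is a permutation `σ` such that replacing `A` by `A ∘ σ`
yields contingency counts `(a - t, b + t, c + t, d - t)`; moreover the corresponding
shift of the count ratio equals `((b + d)/(d - t)) * (t/d)`. -/
theorem stmt0 (m : ℕ) (C A : Fin m → Bool) (P : Fin m → Prop) [DecidablePred P]
    (a b c d : ℕ)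
    (ha : a = (Finset.univ.filter (fun i => P i ∧ A i = false ∧ C i = false)).card)
    (hb : b = (Finset.univ.filter (fun i => P i ∧ A i = false ∧ C i = true)).card)
    (hc : c = (Finset.univ.filter (fun i => P i ∧ A i = true ∧ C i = false)).card)
    (hd : d = (Finset.univ.filter (fun i => P i ∧ A i = true ∧ C i = true)).card)
    (t : ℤ) (ht1 : -(min b c : ℤ) ≤ t) (ht2 : t ≤ (min a d : ℤ)) :
    (∃ σ : Equiv.Perm (Fin m),
      (((Finset.univ.filter (fun i => P i ∧ A (σ i) = false ∧ C i = false)).card : ℤ)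
          = (a : ℤ) - t) ∧
      (((Finset.univ.filter (fun i => P i ∧ A (σ i) = false ∧ C i = true)).card : ℤ)
          = (b : ℤ) + t) ∧
      (((Finset.univ.filter (fun i => P i ∧ A (σ i) = true ∧ C i = false)).card : ℤ)
          = (c : ℤ) + t) ∧
      (((Finset.univ.filter (fun i => P i ∧ A (σ i) = true ∧ C i = true)).card : ℤ)
          = (d : ℤ) - t)) ∧
    (0 < d → 0 < (d : ℤ) - t →
      ((b : ℝ) + (t : ℝ)) / ((d : ℝ) - (t : ℝ)) - (b : ℝ) / (d : ℝ)
        = (((b : ℝ) + (d : ℝ)) / ((d : ℝ) - (t : ℝ))) * ((t : ℝ) / (d : ℝ))) := by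
  refine ⟨?_, fun hd0 hdt => ?_⟩
  · rcases le_or_gt 0 t with ht | ht
    · lift t to ℕ using ht
      obtain ⟨σ, h₁, h₂, h₃, h₄⟩ :=
        exists_perm_crossover (P := P) (C := C) (A := A) (u := false) (v := true) (by decide) (n := t)
          (by simp only [contingencyCell]; omega) (by simp only [contingencyCell]; omega)
      simp only [contingencyCell, Function.comp_apply] at h₁ h₂ h₃ h₄
      exact ⟨σ, by omega, by omega, by omega, by omega⟩
    · obtain ⟨n, rfl⟩ := Int.exists_eq_neg_ofNat ht.le
      obtain ⟨σ, h₁, h₂, h₃, h₄⟩ :=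
        exists_perm_crossover (P := P) (C := C) (A := A) (u := true) (v := false) (by decide) (n := n)
          (by simp only [contingencyCell]; omega) (by simp only [contingencyCell]; omega)
      simp only [contingencyCell, Function.comp_apply] at h₁ h₂ h₃ h₄
      exact ⟨σ, by omega, by omega, by omega, by omega⟩
  · have hd' : (d : ℝ) ≠ 0 := by positivity
    have htd : (t : ℝ) < d := by exact_mod_cast (show t < d by omega)
    have hdt' : (d : ℝ) - t ≠ 0 := (sub_pos.2 htd).ne'
    field_simp
    ring
end

section
/- Let m, d be natural numbers, y : Fin m → {−1, 1} labels, and x : Fin m → ℝ^d. (A) Let M be a real m × m matrix with unit column sums (Σ_i M_{i,l} = 1 for every l) that is block-class (M_{i,l} = 0 whenever y_i ≠ y_l), and let f : ℝ^d → ℝ be a linear map. Then Σ_i y_i · f(Σ_l M_{i,l} • x_l) = Σ_i y_i · f(x_i). (B) If ς is a permutation of Fin m with y ∘ ς = y, then for every function g : ℝ^d → ℝ, Σ_i y_i · g(x_{ς(i)}) = Σ_i y_i · g(x_i). In particular, in either case the mean operator Σ_i y_i • x_i (case A with f ranging over coordinate projections) is invariant under the Crossover Process. -/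
/-- mean-operator consistency of the Crossover Process, Lemma 5 of the
appendix. (A) For any unnormalized column-stochastic block-class matrix `M` and any linear
map `f`, `∑ i, y i * f (∑ l, M i l • x l) = ∑ i, y i * f (x i)`; (B) for any label-preserving
permutation `ς` and any function `g`, `∑ i, y i * g (x (ς i)) = ∑ i, y i * g (x i)`.
In particular the mean operator `∑ i, y i • x i` is invariant in either case. -/
theorem stmt2 (m d : ℕ) (y : Fin m → ℝ) (hy : ∀ i, y i = 1 ∨ y i = -1)
    (x : Fin m → (Fin d → ℝ)) :
    (∀ M : Matrix (Fin m) (Fin m) ℝ,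
      (∀ l, ∑ i, M i l = 1) →
      (∀ i l, y i ≠ y l → M i l = 0) →
      (∀ f : (Fin d → ℝ) →ₗ[ℝ] ℝ,
        ∑ i, y i * f (∑ l, M i l • x l) = ∑ i, y i * f (x i)) ∧
      (∑ i, y i • (∑ l, M i l • x l)) = ∑ i, y i • x i) ∧
    (∀ ς : Equiv.Perm (Fin m), (∀ i, y (ς i) = y i) →
      (∀ g : (Fin d → ℝ) → ℝ,
        ∑ i, y i * g (x (ς i)) = ∑ i, y i * g (x i)) ∧
      (∑ i, y i • x (ς i)) = ∑ i, y i • x i) := by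
  have key : ∀ (M : Matrix (Fin m) (Fin m) ℝ), (∀ l, ∑ i, M i l = 1) →
      (∀ i l, y i ≠ y l → M i l = 0) → ∀ l, ∑ i, y i * M i l = y l := by
    intro M hcol hblk l
    have : ∀ i, y i * M i l = y l * M i l := by
      intro i
      by_cases h : y i = y l
      · rw [h]
      · rw [hblk i l h]; ring
    simp only [this, ← Finset.mul_sum, hcol l, mul_one]
  constructor
  · intro M hcol hblk
    have hvec : (∑ i, y i • (∑ l, M i l • x l)) = ∑ i, y i • x i := by
      have : (∑ i, y i • (∑ l, M i l • x l)) = ∑ i, ∑ l, (y i * M i l) • x l := by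
        refine Finset.sum_congr rfl fun i _ => ?_
        rw [Finset.smul_sum]
        exact Finset.sum_congr rfl fun l _ => smul_smul _ _ _
      rw [this, Finset.sum_comm]
      refine Finset.sum_congr rfl fun l _ => ?_
      rw [← Finset.sum_smul, key M hcol hblk l]
    refine ⟨fun f => ?_, hvec⟩
    have : ∑ i, y i * f (∑ l, M i l • x l) = ∑ i, ∑ l, (y i * M i l) * f (x l) := by
      refine Finset.sum_congr rfl fun i _ => ?_
      rw [map_sum, Finset.mul_sum]
      refine Finset.sum_congr rfl fun l _ => ?_
      rw [map_smul, smul_eq_mul]; ring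
    rw [this, Finset.sum_comm]
    refine Finset.sum_congr rfl fun l _ => ?_
    rw [← Finset.sum_mul, key M hcol hblk l]
  · intro ς hς
    have hg : ∀ g : (Fin d → ℝ) → ℝ, ∑ i, y i * g (x (ς i)) = ∑ i, y i * g (x i) := by
      intro g
      calc ∑ i, y i * g (x (ς i)) = ∑ i, y (ς i) * g (x (ς i)) := by
            simp only [hς]
        _ = ∑ i, y i * g (x i) := Equiv.sum_comp ς fun i => y i * g (x i)
    refine ⟨hg, ?_⟩
    calc ∑ i, y i • x (ς i) = ∑ i, y (ς i) • x (ς i) := by simp only [hς]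
      _ = ∑ i, y i • x i := Equiv.sum_comp ς fun i => y i • x i
end

section
/- Let m ≥ 1, let H be a nonempty family of functions g : Fin m → ℝ that is uniformly bounded (there exists B with |g(i)| ≤ B for all g ∈ H and all i), and let ς be a permutation of Fin m. Then 2^{−m} Σ_{σ ∈ {−1,1}^m} sup_{g ∈ H} |(1/m) Σ_i σ_i · (g(i) − g(ς(i)))| ≤ 2 · 2^{−m} Σ_{σ ∈ {−1,1}^m} sup_{g ∈ H} |(1/m) Σ_i σ_i · g(i)|. -/
/-- The value `±1` attached to a Boolean Rademacher sign. -/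
noncomputable def rsign (b : Bool) : ℝ := if b then 1 else -1

lemma abs_rsign (b : Bool) : |rsign b| = 1 := by
  cases b <;> simp [rsign]

/-- Lemma 2 of the paper, Setting B. For a uniformly bounded nonempty
family `H` of functions on `Fin m` and a permutation shuffle `ς`, the Rademacher
Crossover-Process complexity is at most twice the empirical Rademacher complexity. -/
theorem stmt3 (m : ℕ) (hm : 1 ≤ m) (H : Set (Fin m → ℝ)) (hne : H.Nonempty)
    (B : ℝ) (hB : ∀ g ∈ H, ∀ i, |g i| ≤ B)
    (ς : Equiv.Perm (Fin m)) :
    ((2 : ℝ) ^ m)⁻¹ * ∑ σ : Fin m → Bool,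
        ⨆ g : H, |(1 / (m : ℝ)) * ∑ i, rsign (σ i) * ((g : Fin m → ℝ) i - (g : Fin m → ℝ) (ς i))|
      ≤ 2 * (((2 : ℝ) ^ m)⁻¹ * ∑ σ : Fin m → Bool,
        ⨆ g : H, |(1 / (m : ℝ)) * ∑ i, rsign (σ i) * (g : Fin m → ℝ) i|) := by
  have hm0 : (0:ℝ) < m := by exact_mod_cast hm
  -- uniform bound on any Rademacher-type average
  have hbound : ∀ (σ : Fin m → Bool) (g : Fin m → ℝ), g ∈ H → ∀ (f : Fin m → Fin m),
      |(1 / (m : ℝ)) * ∑ i, rsign (σ i) * g (f i)| ≤ B := by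
    intro σ g hg f
    have h1 : |∑ i, rsign (σ i) * g (f i)| ≤ ∑ i : Fin m, B := by
      refine (Finset.abs_sum_le_sum_abs _ _).trans (Finset.sum_le_sum ?_)
      intro i _
      rw [abs_mul, abs_rsign, one_mul]
      exact hB g hg (f i)
    have : |(1 / (m : ℝ)) * ∑ i, rsign (σ i) * g (f i)|
        = (1 / (m : ℝ)) * |∑ i, rsign (σ i) * g (f i)| := by
      rw [abs_mul, abs_of_pos (by positivity : (0:ℝ) < 1 / (m:ℝ))]
    rw [this]
    calc (1 / (m : ℝ)) * |∑ i, rsign (σ i) * g (f i)|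
        ≤ (1 / (m : ℝ)) * ∑ i : Fin m, B := by
          exact mul_le_mul_of_nonneg_left h1 (by positivity)
      _ = B := by
          rw [Finset.sum_const, Finset.card_univ, Fintype.card_fin, nsmul_eq_mul]
          field_simp
  have hbdd : ∀ (σ : Fin m → Bool) (f : Fin m → Fin m),
      BddAbove (Set.range fun g : H => |(1 / (m : ℝ)) * ∑ i, rsign (σ i) * (g : Fin m → ℝ) (f i)|) := by
    intro σ f
    refine ⟨B, ?_⟩
    rintro x ⟨g, rfl⟩
    exact hbound σ g g.2 f
  haveI : Nonempty H := hne.to_subtype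
  set F : (Fin m → Bool) → ℝ := fun σ =>
    ⨆ g : H, |(1 / (m : ℝ)) * ∑ i, rsign (σ i) * (g : Fin m → ℝ) i| with hF
  set F' : (Fin m → Bool) → ℝ := fun σ =>
    ⨆ g : H, |(1 / (m : ℝ)) * ∑ i, rsign (σ i) * (g : Fin m → ℝ) (ς i)| with hF'
  -- pointwise triangle inequality
  have key : ∀ σ : Fin m → Bool,
      (⨆ g : H, |(1 / (m : ℝ)) * ∑ i, rsign (σ i) * ((g : Fin m → ℝ) i - (g : Fin m → ℝ) (ς i))|)
        ≤ F σ + F' σ := by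
    intro σ
    refine ciSup_le fun g => ?_
    have heq : (1 / (m : ℝ)) * ∑ i, rsign (σ i) * ((g : Fin m → ℝ) i - (g : Fin m → ℝ) (ς i))
        = (1 / (m : ℝ)) * ∑ i, rsign (σ i) * (g : Fin m → ℝ) i
          - (1 / (m : ℝ)) * ∑ i, rsign (σ i) * (g : Fin m → ℝ) (ς i) := by
      rw [← mul_sub, ← Finset.sum_sub_distrib]
      congr 1
      exact Finset.sum_congr rfl fun i _ => by ring
    rw [heq]
    have h1 : |(1 / (m : ℝ)) * ∑ i, rsign (σ i) * (g : Fin m → ℝ) i| ≤ F σ :=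
      le_ciSup (hbdd σ id) g
    have h2 : |(1 / (m : ℝ)) * ∑ i, rsign (σ i) * (g : Fin m → ℝ) (ς i)| ≤ F' σ :=
      le_ciSup (hbdd σ ς) g
    exact (abs_sub _ _).trans (add_le_add h1 h2)
  -- sum of F' equals sum of F, by reindexing σ ↦ σ ∘ ς.symm
  have hFF' : ∑ σ : Fin m → Bool, F' σ = ∑ σ : Fin m → Bool, F σ := by
    have h1 : ∀ σ : Fin m → Bool, F' σ = F (σ ∘ ς.symm) := by
      intro σ
      simp only [hF, hF']
      congr 1
      funext g
      congr 1
      congr 1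
      calc ∑ i, rsign (σ i) * (g : Fin m → ℝ) (ς i)
          = ∑ i, rsign ((σ ∘ ς.symm) (ς i)) * (g : Fin m → ℝ) (ς i) := by simp
        _ = ∑ i, rsign ((σ ∘ ς.symm) i) * (g : Fin m → ℝ) i :=
            Equiv.sum_comp ς (fun j => rsign ((σ ∘ ς.symm) j) * (g : Fin m → ℝ) j)
    rw [Finset.sum_congr rfl fun σ _ => h1 σ]
    exact Fintype.sum_equiv (Equiv.arrowCongr ς (Equiv.refl Bool)) _ _ (fun σ => rfl)
  have hsum : ∑ σ : Fin m → Bool,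
      (⨆ g : H, |(1 / (m : ℝ)) * ∑ i, rsign (σ i) * ((g : Fin m → ℝ) i - (g : Fin m → ℝ) (ς i))|)
      ≤ 2 * ∑ σ : Fin m → Bool, F σ := by
    calc _ ≤ ∑ σ : Fin m → Bool, (F σ + F' σ) := Finset.sum_le_sum fun σ _ => key σ
      _ = ∑ σ : Fin m → Bool, F σ + ∑ σ : Fin m → Bool, F' σ := Finset.sum_add_distrib
      _ = 2 * ∑ σ : Fin m → Bool, F σ := by rw [hFF']; ring
  have hpos : (0:ℝ) ≤ ((2 : ℝ) ^ m)⁻¹ := by positivity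
  calc ((2 : ℝ) ^ m)⁻¹ * ∑ σ : Fin m → Bool,
        ⨆ g : H, |(1 / (m : ℝ)) * ∑ i, rsign (σ i) * ((g : Fin m → ℝ) i - (g : Fin m → ℝ) (ς i))|
      ≤ ((2 : ℝ) ^ m)⁻¹ * (2 * ∑ σ : Fin m → Bool, F σ) :=
        mul_le_mul_of_nonneg_left hsum hpos
    _ = 2 * (((2 : ℝ) ^ m)⁻¹ * ∑ σ : Fin m → Bool, F σ) := by ring
end

section
/- Let m ≥ 1, d ∈ ℕ, x : Fin m → ℝ^d, and let ς be a permutation of Fin m. For a column index j let x_{·j} ∈ ℝ^m denote the j-th coordinate column (x_{·j})_i = (x_i)_j, and let (x∘ς)_{·j} denote the permuted column with i-th entry (x_{ς(i)})_j. Assume var(x_{·j}) > 0 for every j. Then (1/m) Σ_i ‖x_i − x_{ς(i)}‖₂² = 2 Σ_j var(x_{·j}) · (1 − ρ(x_{·j}, (x∘ς)_{·j})). Equivalently, writing K for the Gram matrix K_{i,i'} = ⟨x_i, x_{i'}⟩ and M_ς for the permutation matrix of ς, (1/m) · trace((I_m − M_ς)ᵀ (I_m − M_ς) K) equals the same quantity.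 -/
open Matrix

/-- Empirical mean of a vector of `m` reals. -/
noncomputable def emean (m : ℕ) (a : Fin m → ℝ) : ℝ := (1 / (m : ℝ)) * ∑ i, a i

/-- Empirical covariance of two vectors of `m` reals. -/
noncomputable def ecov (m : ℕ) (a b : Fin m → ℝ) : ℝ :=
  (1 / (m : ℝ)) * ∑ i, a i * b i - emean m a * emean m b

/-- Empirical variance. -/
noncomputable def evar (m : ℕ) (a : Fin m → ℝ) : ℝ := ecov m a a

/-- Pearson correlation. -/
noncomputable def ecorr (m : ℕ) (a b : Fin m → ℝ) : ℝ :=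
  ecov m a b / Real.sqrt (evar m a * evar m b)

/-- The `m × m` permutation matrix of a permutation `σ` of `Fin m`:
entry `(i, j)` is `1` iff `j = σ i`. -/
noncomputable def permMat (m : ℕ) (σ : Equiv.Perm (Fin m)) : Matrix (Fin m) (Fin m) ℝ :=
  Matrix.of fun i j => if σ i = j then 1 else 0

/-! Since `a ∘ ς` has the same mean and variance as `a`, expanding the square gives
`(1/m) ∑ᵢ (aᵢ - a_{ς i})² = 2 (var a - cov(a, a ∘ ς))` for every coordinate column `a`, and
`var a · (1 - ρ(a, a ∘ ς)) = var a - cov(a, a ∘ ς)` once `var a > 0`. For the trace form,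
`trace (Aᵀ A K) = trace (A K Aᵀ)` is the sum of the squared norms of the vectors `∑ᵢ A_{l i} xᵢ`,
which for `A = I - M_ς` are `x_l - x_{ς l}`. -/

section Moments

variable {m : ℕ}

lemma mean_sq_sub_eq (a b : Fin m → ℝ) :
    (1 / (m : ℝ)) * ∑ i, (a i - b i) ^ 2
      = evar m a + evar m b - 2 * ecov m a b + (emean m a - emean m b) ^ 2 := by
  simp only [evar, ecov, emean, sub_sq', ← pow_two, mul_assoc, Finset.sum_add_distrib,
    Finset.sum_sub_distrib, ← Finset.mul_sum]
  ring

variable (a : Fin m → ℝ) (σ : Equiv.Perm (Fin m))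

lemma emean_comp_perm : emean m (fun i => a (σ i)) = emean m a := by
  rw [emean, emean, Equiv.sum_comp σ a]

lemma evar_comp_perm : evar m (fun i => a (σ i)) = evar m a := by
  rw [evar, evar, ecov, ecov, emean_comp_perm, Equiv.sum_comp σ (fun i => a i * a i)]

lemma mean_sq_sub_comp_perm :
    (1 / (m : ℝ)) * ∑ i, (a i - a (σ i)) ^ 2
      = 2 * (evar m a - ecov m a (fun i => a (σ i))) := by
  rw [mean_sq_sub_eq, evar_comp_perm, emean_comp_perm]
  ring

lemma evar_mul_one_sub_ecorr_comp_perm (ha : 0 < evar m a) :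
    evar m a * (1 - ecorr m a (fun i => a (σ i))) = evar m a - ecov m a (fun i => a (σ i)) := by
  rw [ecorr, evar_comp_perm, Real.sqrt_mul_self ha.le]
  field_simp

end Moments

lemma trace_transpose_mul_mul_gram {ι κ E : Type*} [Fintype ι] [Fintype κ]
    [NormedAddCommGroup E] [InnerProductSpace ℝ E] (A : Matrix κ ι ℝ) (v : ι → E) :
    trace (Aᵀ * A * gram ℝ v) = ∑ l, ‖∑ i, A l i • v i‖ ^ 2 := by
  rw [Matrix.mul_assoc, trace_mul_comm, trace]
  refine Finset.sum_congr rfl fun l _ => ?_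
  rw [← real_inner_self_eq_norm_sq, ← star_dotProduct_gram_mulVec]
  simp only [diag_apply, mul_apply, transpose_apply, dotProduct, mulVec, star_trivial,
    Finset.mul_sum, Finset.sum_mul]
  rw [Finset.sum_comm]
  exact Finset.sum_congr rfl fun _ _ => Finset.sum_congr rfl fun _ _ => by ring

lemma sum_one_sub_permMat_smul {m : ℕ} {E : Type*} [AddCommGroup E] [Module ℝ E]
    (σ : Equiv.Perm (Fin m)) (v : Fin m → E) (l : Fin m) :
    ∑ i, (1 - permMat m σ) l i • v i = v l - v (σ l) := by
  simp [permMat, sub_smul, Finset.sum_sub_distrib, one_apply, ite_smul]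

lemma EuclideanSpace.norm_sub_sq {n : Type*} [Fintype n] (y z : EuclideanSpace ℝ n) :
    ‖y - z‖ ^ 2 = ∑ j, (y j - z j) ^ 2 := by
  simp [EuclideanSpace.real_norm_sq_eq]

theorem stmt6_general (m d : ℕ) (x : Fin m → EuclideanSpace ℝ (Fin d))
    (ς : Equiv.Perm (Fin m))
    (hvar : ∀ j, 0 < evar m (fun i => x i j)) :
    ((1 / (m : ℝ)) * ∑ i, ‖x i - x (ς i)‖ ^ 2
      = 2 * ∑ j, evar m (fun i => x i j) *
          (1 - ecorr m (fun i => x i j) (fun i => x (ς i) j))) ∧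
    ((1 / (m : ℝ)) * Matrix.trace
        ((1 - permMat m ς)ᵀ * (1 - permMat m ς) *
          Matrix.of (fun i i' => (inner ℝ (x i) (x i') : ℝ)))
      = 2 * ∑ j, evar m (fun i => x i j) *
          (1 - ecorr m (fun i => x i j) (fun i => x (ς i) j))) := by
  have hdist : (1 / (m : ℝ)) * ∑ i, ‖x i - x (ς i)‖ ^ 2
      = 2 * ∑ j, evar m (fun i => x i j) *
          (1 - ecorr m (fun i => x i j) (fun i => x (ς i) j)) := by
    simp only [EuclideanSpace.norm_sub_sq]
    rw [Finset.sum_comm, Finset.mul_sum, Finset.mul_sum]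
    refine Finset.sum_congr rfl fun j _ => ?_
    rw [mean_sq_sub_comp_perm (fun i => x i j) ς,
      evar_mul_one_sub_ecorr_comp_perm (fun i => x i j) ς (hvar j)]
  refine ⟨hdist, ?_⟩
  rw [← hdist, show of (fun i i' => inner ℝ (x i) (x i')) = gram ℝ x from rfl,
    trace_transpose_mul_mul_gram]
  simp only [sum_one_sub_permMat_smul]

/-- identity `(simplinn)` accompanying Theorem 3. For a permutation
Crossover Process, `(1/m) ∑ᵢ ‖xᵢ - x_{ς(i)}‖²` equals
`2 ∑ⱼ var(x_{·j}) (1 - ρ(x_{·j}, (x∘ς)_{·j}))`, and the same quantity equals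
`(1/m) trace((I - M_ς)ᵀ (I - M_ς) K)` for the Gram matrix `K`. -/
theorem stmt6 (m d : ℕ) (hm : 1 ≤ m) (x : Fin m → EuclideanSpace ℝ (Fin d))
    (ς : Equiv.Perm (Fin m))
    (hvar : ∀ j, 0 < evar m (fun i => x i j)) :
    ((1 / (m : ℝ)) * ∑ i, ‖x i - x (ς i)‖ ^ 2
      = 2 * ∑ j, evar m (fun i => x i j) *
          (1 - ecorr m (fun i => x i j) (fun i => x (ς i) j))) ∧
    ((1 / (m : ℝ)) * Matrix.trace
        ((1 - permMat m ς)ᵀ * (1 - permMat m ς) *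
          Matrix.of (fun i i' => (inner ℝ (x i) (x i') : ℝ)))
      = 2 * ∑ j, evar m (fun i => x i j) *
          (1 - ecorr m (fun i => x i j) (fun i => x (ς i) j))) :=
  stmt6_general m d x ς hvar
end

section
/- For every natural number n ≥ 1, (∏_{k=1}^{2n−1} (2k − 1)) / (2n)! ≥ 2^{−n}. Equivalently, with ε* := 1 − 1/(2√2), the ratio ∏_{k=1}^{2n−1}(2k−1) / (2n)! is at least (2(1 − ε*))^{2n} for all n ≥ 1. -/
/-! Passing from `n` to `n + 1` multiplies `(4n - 3)‼` by `(4n - 1)(4n + 1)` and `(2n)!` by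
`(2n + 1)(2n + 2)`, which is at most twice as much; so `2⁻ⁿ (2n)! ≤ (4n - 3)‼` by induction.
The second bound is the same one, since `2 (1 - ε*) = 1 / √2`. -/

open Nat Finset

theorem Nat.prod_Icc_two_mul_sub_one (m : ℕ) : ∏ k ∈ Icc 1 m, (2 * k - 1) = (2 * m - 1)‼ := by
  induction m with
  | zero => rfl
  | succ m ih =>
    rw [prod_Icc_succ_top (by omega), ih, show 2 * (m + 1) - 1 = 2 * m + 1 by omega,
      doubleFactorial_add_one, Nat.mul_comm]

theorem Nat.factorial_two_mul_le_two_pow_mul_doubleFactorial (n : ℕ) :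
    (2 * n)! ≤ 2 ^ n * (4 * n - 3)‼ := by
  obtain _ | n := n
  · rfl
  rw [show 4 * (n + 1) - 3 = 4 * n + 1 by omega]
  induction n with
  | zero => decide
  | succ n ih =>
    have hfac : (2 * (n + 2))! = (2 * n + 4) * (2 * n + 3) * (2 * (n + 1))! := by
      rw [show 2 * (n + 2) = 2 * (n + 1) + 1 + 1 by ring, factorial_succ, factorial_succ]; ring
    have hodd : (4 * (n + 1) + 1)‼ = (4 * n + 5) * (4 * n + 3) * (4 * n + 1)‼ := by
      rw [show 4 * (n + 1) + 1 = 4 * n + 1 + 2 + 2 by ring, doubleFactorial_add_two,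
        doubleFactorial_add_two]; ring
    have hstep : (2 * n + 4) * (2 * n + 3) ≤ 2 * ((4 * n + 5) * (4 * n + 3)) := by nlinarith
    calc (2 * (n + 2))! = (2 * n + 4) * (2 * n + 3) * (2 * (n + 1))! := hfac
      _ ≤ 2 * ((4 * n + 5) * (4 * n + 3)) * (2 ^ (n + 1) * (4 * n + 1)‼) :=
        Nat.mul_le_mul hstep ih
      _ = 2 ^ (n + 2) * (4 * (n + 1) + 1)‼ := by rw [hodd]; ring

theorem Real.two_mul_one_sub_one_sub_inv_two_sqrt_two_pow_two_mul (n : ℕ) :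
    (2 * (1 - (1 - 1 / (2 * √2)))) ^ (2 * n) = (2⁻¹ : ℝ) ^ n := by
  have hsqrt : 2 * (1 - (1 - 1 / (2 * √2))) = (√2)⁻¹ := by field_simp; ring
  rw [hsqrt, pow_mul, inv_pow, sq_sqrt zero_le_two, inv_pow]

theorem stmt8_general (n : ℕ) :
    ((2 : ℝ)⁻¹) ^ n ≤
      (∏ k ∈ Finset.Icc 1 (2 * n - 1), ((2 * k - 1 : ℕ) : ℝ)) / ((2 * n).factorial : ℝ) ∧
    (2 * (1 - (1 - 1 / (2 * Real.sqrt 2)))) ^ (2 * n) ≤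
      (∏ k ∈ Finset.Icc 1 (2 * n - 1), ((2 * k - 1 : ℕ) : ℝ)) / ((2 * n).factorial : ℝ) := by
  have hprod : ∏ k ∈ Icc 1 (2 * n - 1), ((2 * k - 1 : ℕ) : ℝ) = ((4 * n - 3)‼ : ℝ) := by
    rw [← Nat.cast_prod, prod_Icc_two_mul_sub_one, show 2 * (2 * n - 1) - 1 = 4 * n - 3 by omega]
  have hhalf : (2⁻¹ : ℝ) ^ n ≤ ((4 * n - 3)‼ : ℝ) / ((2 * n)! : ℝ) := by
    rw [le_div_iff₀ (by positivity), inv_pow, inv_mul_le_iff₀ (by positivity)]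
    exact_mod_cast factorial_two_mul_le_two_pow_mul_doubleFactorial n
  rw [hprod, Real.two_mul_one_sub_one_sub_inv_two_sqrt_two_pow_two_mul]
  exact ⟨hhalf, hhalf⟩

/-- key combinatorial lemma in the proof of Theorem 3. For every `n ≥ 1`,
`(∏_{k=1}^{2n-1} (2k-1)) / (2n)! ≥ 2^{-n}`; equivalently, with `ε* = 1 - 1/(2√2)`, the
ratio is at least `(2(1-ε*))^{2n}`. -/
theorem stmt8 (n : ℕ) (hn : 1 ≤ n) :
    ((2 : ℝ)⁻¹) ^ n ≤
      (∏ k ∈ Finset.Icc 1 (2 * n - 1), ((2 * k - 1 : ℕ) : ℝ)) / ((2 * n).factorial : ℝ) ∧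
    (2 * (1 - (1 - 1 / (2 * Real.sqrt 2)))) ^ (2 * n) ≤
      (∏ k ∈ Finset.Icc 1 (2 * n - 1), ((2 * k - 1 : ℕ) : ℝ)) / ((2 * n).factorial : ℝ) :=
  stmt8_general n
end

section
/- Let m ≥ 1, let H be a nonempty uniformly bounded family of functions g : Fin m → ℝ, and let ς be a permutation of Fin m. For σ ∈ {−1,1}^m define the weights w_σ(i) := (σ_i − σ_{ς^{-1}(i)})/2, so that w_σ(i) ∈ {−1, 0, 1}. Then 2^{−m} Σ_{σ ∈ {−1,1}^m} sup_{g ∈ H} |(1/m) Σ_i σ_i · (g(i) − g(ς(i)))| = 2 · 2^{−m} Σ_{σ ∈ {−1,1}^m} sup_{g ∈ H} |(1/m) Σ_i w_σ(i) · g(i)|. -/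
/-- Lemma 7 `thradcomp2` of the appendix. With weights
`w_σ(i) := (σ_i - σ_{ς⁻¹(i)})/2 ∈ {-1,0,1}`, the Rademacher Crossover-Process complexity
equals twice the averaged supremum of the `w`-weighted empirical means. -/
theorem stmt9 (m : ℕ) (hm : 1 ≤ m) (H : Set (Fin m → ℝ)) (hne : H.Nonempty)
    (B : ℝ) (hB : ∀ g ∈ H, ∀ i, |g i| ≤ B)
    (ς : Equiv.Perm (Fin m)) :
    (∀ σ : Fin m → Bool, ∀ i,
      (rsign (σ i) - rsign (σ (ς⁻¹ i))) / 2 ∈ ({-1, 0, 1} : Set ℝ)) ∧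
    ((2 : ℝ) ^ m)⁻¹ * ∑ σ : Fin m → Bool,
        ⨆ g : H, |(1 / (m : ℝ)) * ∑ i,
          rsign (σ i) * ((g : Fin m → ℝ) i - (g : Fin m → ℝ) (ς i))|
      = 2 * (((2 : ℝ) ^ m)⁻¹ * ∑ σ : Fin m → Bool,
        ⨆ g : H, |(1 / (m : ℝ)) * ∑ i,
          ((rsign (σ i) - rsign (σ (ς⁻¹ i))) / 2) * (g : Fin m → ℝ) i|) := by
  constructor
  · intro σ i
    rcases h1 : σ i <;> rcases h2 : σ (ς⁻¹ i) <;>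
      simp [rsign, h1, h2, Set.mem_insert_iff] <;> norm_num
  · have key : ∀ σ : Fin m → Bool,
        (⨆ g : H, |(1 / (m : ℝ)) * ∑ i,
          rsign (σ i) * ((g : Fin m → ℝ) i - (g : Fin m → ℝ) (ς i))|)
        = 2 * ⨆ g : H, |(1 / (m : ℝ)) * ∑ i,
          ((rsign (σ i) - rsign (σ (ς⁻¹ i))) / 2) * (g : Fin m → ℝ) i| := by
      intro σ
      rw [Real.mul_iSup_of_nonneg (by norm_num)]
      apply congrArg
      funext g
      have hsum : ∑ i, rsign (σ i) * ((g : Fin m → ℝ) i - (g : Fin m → ℝ) (ς i))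
          = 2 * ∑ i, ((rsign (σ i) - rsign (σ (ς⁻¹ i))) / 2) * (g : Fin m → ℝ) i := by
        have hperm : ∑ i, rsign (σ i) * (g : Fin m → ℝ) (ς i)
            = ∑ i, rsign (σ (ς⁻¹ i)) * (g : Fin m → ℝ) i := by
          apply Fintype.sum_equiv ς
          intro i
          simp
        simp only [mul_sub, Finset.sum_sub_distrib, hperm, Finset.mul_sum]
        rw [← Finset.sum_sub_distrib]
        apply Finset.sum_congr rfl
        intro i _
        ring
      rw [hsum]
      rw [show (1 / (m : ℝ)) * (2 * ∑ i, ((rsign (σ i) - rsign (σ (ς⁻¹ i))) / 2)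
          * (g : Fin m → ℝ) i) = 2 * ((1 / (m : ℝ)) * ∑ i,
          ((rsign (σ i) - rsign (σ (ς⁻¹ i))) / 2) * (g : Fin m → ℝ) i) by ring,
        abs_mul]
      norm_num
    simp only [key, ← Finset.mul_sum]
    ring
end

section
/- Let m ≥ 1, let K be a symmetric real m × m matrix, and let F ⊆ Fin m with |F| = k ≥ 1. Let S_F denote the set of permutations of Fin m fixing every element outside F, and for ς ∈ S_F let M_ς be its permutation matrix ((M_ς)_{i,j} = 1 iff j = ς(i)). Then the uniform average over ς ∈ S_F of trace((I_m − M_ς)ᵀ (I_m − M_ς) K) equals (1/k) · Σ_{(i,i') ∈ F × F, i ≠ i'} (K_{i,i} + K_{i',i'} − 2·K_{i,i'}). In particular, when K is the Gram matrix of points x : Fin m → ℝ^d (K_{i,i'} = ⟨x_i, x_{i'}⟩), this average equals (1/k) · Σ_{(i,i') ∈ F × F, i ≠ i'} ‖x_i − x_{i'}‖₂². -/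
/-!
Writing `M = M_ς`, cyclicity of the trace gives
`trace((I - M)ᵀ (I - M) K) = ∑ᵢ (K i i + K (ς i) (ς i) - K i (ς i) - K (ς i) i)`,
the sum of the "squared distances" between `i` and `ς i` measured by `K`; only `i ∈ F`
contribute.
For a fixed `i ∈ F`, the image `ς i` of a uniformly random `ς ∈ S_F` is uniform on `F`, since
right multiplication by the transposition `(i j)` is a bijection of `S_F` sending `ς i` to `ς j`.
So the average is `(1/k) ∑_{i, j ∈ F}` of these squared distances, the diagonal terms vanish,
and `∑ K i j = ∑ K j i` over the symmetric index set turns the summand into the stated one.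
-/

open Matrix

open Finset Equiv Nat

lemma permMat_eq_permMatrix (m : ℕ) (σ : Perm (Fin m)) : permMat m σ = σ.permMatrix ℝ := by
  ext i j
  simp [permMat]

section

variable {α : Type*} [DecidableEq α]

lemma trace_transpose_one_sub_permMatrix_mul [Fintype α] {R : Type*} [CommRing R]
    (σ : Perm α) (K : Matrix α α R) :
    trace ((1 - σ.permMatrix R)ᵀ * (1 - σ.permMatrix R) * K) =
      ∑ i, (K i i + K (σ i) (σ i) - K i (σ i) - K (σ i) i) := by
  rw [Matrix.mul_assoc, trace_mul_comm]
  simp only [transpose_sub, transpose_one, transpose_permMatrix, Matrix.sub_mul, Matrix.mul_sub,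
    Matrix.one_mul, Matrix.mul_one, Perm.permMatrix, PEquiv.toMatrix_toPEquiv_mul,
    PEquiv.mul_toMatrix_toPEquiv, trace, Matrix.diag, Matrix.sub_apply, submatrix_apply,
    Perm.inv_def, symm_symm, id_eq, sum_sub_distrib, sum_add_distrib]
  abel

lemma filter_forall_notMem_apply_eq_eq_permsOfFinset [Fintype α] (s : Finset α)
    [DecidablePred fun σ : Perm α => ∀ i ∉ s, σ i = i] :
    univ.filter (fun σ : Perm α => ∀ i ∉ s, σ i = i) = permsOfFinset s := by
  ext σ
  simp only [mem_filter, mem_univ, true_and, mem_perms_of_finset_iff]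
  exact ⟨fun h x hx => by_contra fun hxs => hx (h x hxs),
    fun h x hxs => by_contra fun hx => hxs (h hx)⟩

lemma mul_mem_permsOfFinset {s : Finset α} {σ τ : Perm α} (hσ : σ ∈ permsOfFinset s)
    (hτ : τ ∈ permsOfFinset s) : σ * τ ∈ permsOfFinset s := by
  rw [mem_perms_of_finset_iff] at *
  intro x hx
  by_cases h : τ x = x
  · exact hσ (by simpa [h] using hx)
  · exact hτ h

lemma swap_mem_permsOfFinset {s : Finset α} {i j : α} (hi : i ∈ s) (hj : j ∈ s) :
    swap i j ∈ permsOfFinset s := by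
  rw [mem_perms_of_finset_iff]
  intro x hx
  rcases eq_or_ne x i with rfl | hxi
  · exact hi
  rcases eq_or_ne x j with rfl | hxj
  · exact hj
  exact absurd (swap_apply_of_ne_of_ne hxi hxj) hx

lemma sum_apply_perm_eq_sum_of_mem_permsOfFinset [Fintype α] {M : Type*} [AddCommMonoid M]
    {s : Finset α} {σ : Perm α} (hσ : σ ∈ permsOfFinset s) {g : α → α → M}
    (hg : ∀ i, g i i = 0) : ∑ i, g i (σ i) = ∑ i ∈ s, g i (σ i) := by
  refine (sum_subset (subset_univ s) fun i _ his => ?_).symm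
  rw [by_contra fun hi => his (mem_perms_of_finset_iff.1 hσ hi), hg]

lemma sum_permsOfFinset_apply_eq {M : Type*} [AddCommMonoid M] {s : Finset α} {i j : α}
    (hi : i ∈ s) (hj : j ∈ s) (f : α → M) :
    ∑ σ ∈ permsOfFinset s, f (σ i) = ∑ σ ∈ permsOfFinset s, f (σ j) := by
  have hswap := swap_mem_permsOfFinset hi hj
  exact sum_nbij' (· * swap i j) (· * swap i j) (fun σ hσ => mul_mem_permsOfFinset hσ hswap)
    (fun σ hσ => mul_mem_permsOfFinset hσ hswap) (fun σ _ => by simp) (fun σ _ => by simp)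
    (fun σ _ => by simp)

theorem card_smul_sum_permsOfFinset_apply {M : Type*} [AddCommMonoid M] {s : Finset α} {i : α}
    (hi : i ∈ s) (f : α → M) :
    #s • ∑ σ ∈ permsOfFinset s, f (σ i) = (#s)! • ∑ j ∈ s, f j :=
  calc #s • ∑ σ ∈ permsOfFinset s, f (σ i)
      = ∑ j ∈ s, ∑ σ ∈ permsOfFinset s, f (σ j) := by
        rw [← sum_const]
        exact sum_congr rfl fun j hj => sum_permsOfFinset_apply_eq hi hj f
    _ = ∑ σ ∈ permsOfFinset s, ∑ j ∈ s, f j := by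
        rw [sum_comm]
        exact sum_congr rfl fun σ hσ =>
          σ.sum_comp s f fun x hx => mem_perms_of_finset_iff.1 hσ hx
    _ = (#s)! • ∑ j ∈ s, f j := by rw [sum_const, card_perms_of_finset]

theorem sum_permsOfFinset_apply_div_factorial {𝕜 : Type*} [Field 𝕜] [CharZero 𝕜]
    {s : Finset α} {i : α} (hi : i ∈ s) (f : α → 𝕜) :
    (∑ σ ∈ permsOfFinset s, f (σ i)) / (#s)! = (∑ j ∈ s, f j) / #s := by
  have hs : (#s : 𝕜) ≠ 0 := by exact_mod_cast (card_pos.2 ⟨i, hi⟩).ne'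
  have h := card_smul_sum_permsOfFinset_apply hi f
  rw [nsmul_eq_mul, nsmul_eq_mul] at h
  rw [div_eq_div_iff (Nat.cast_ne_zero.2 (factorial_ne_zero _)) hs]
  linear_combination h

lemma sum_offDiag_eq_sum_product {M : Type*} [AddCommMonoid M] (s : Finset α)
    {g : α × α → M} (hg : ∀ i, g (i, i) = 0) :
    ∑ p ∈ s.offDiag, g p = ∑ p ∈ s ×ˢ s, g p := by
  have hdiag : ∑ p ∈ s.diag, g p = 0 := sum_eq_zero fun ⟨a, b⟩ hp => by
    obtain ⟨-, rfl : a = b⟩ := mem_diag.1 hp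
    exact hg a
  rw [← diag_union_offDiag, sum_union (disjoint_diag_offDiag s), hdiag, zero_add]

lemma sum_sum_eq_sum_offDiag {R : Type*} [CommRing R] (K : Matrix α α R) (s : Finset α) :
    ∑ i ∈ s, ∑ j ∈ s, (K i i + K j j - K i j - K j i) =
      ∑ p ∈ s.offDiag, (K p.1 p.1 + K p.2 p.2 - 2 * K p.1 p.2) := by
  rw [sum_offDiag_eq_sum_product s (by intro; ring), sum_product]
  simp only [sum_sub_distrib, ← mul_sum]
  rw [sum_comm (f := fun i j => K j i)]
  ring

theorem sum_permsOfFinset_trace_div_factorial [Fintype α] {𝕜 : Type*} [Field 𝕜]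
    [CharZero 𝕜] (K : Matrix α α 𝕜) (s : Finset α) :
    (∑ σ ∈ permsOfFinset s, trace ((1 - σ.permMatrix 𝕜)ᵀ * (1 - σ.permMatrix 𝕜) * K))
        / (#s)! = (∑ p ∈ s.offDiag, (K p.1 p.1 + K p.2 p.2 - 2 * K p.1 p.2)) / #s := by
  set d : α → α → 𝕜 := fun i j => K i i + K j j - K i j - K j i
  have hd : ∀ i, d i i = 0 := fun i => by simp only [d]; ring
  calc _ = (∑ σ ∈ permsOfFinset s, ∑ i ∈ s, d i (σ i)) / (#s)! := by
        congr 1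
        refine sum_congr rfl fun σ hσ => ?_
        rw [trace_transpose_one_sub_permMatrix_mul]
        exact sum_apply_perm_eq_sum_of_mem_permsOfFinset hσ hd
    _ = ∑ i ∈ s, (∑ σ ∈ permsOfFinset s, d i (σ i)) / (#s)! := by rw [sum_comm, sum_div]
    _ = ∑ i ∈ s, (∑ j ∈ s, d i j) / #s :=
        sum_congr rfl fun i hi => sum_permsOfFinset_apply_div_factorial hi (d i)
    _ = _ := by rw [← sum_div, sum_sum_eq_sum_offDiag]

end

theorem stmt11_general (m : ℕ) (K : Matrix (Fin m) (Fin m) ℝ)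
    (F : Finset (Fin m)) (k : ℕ) (hkcard : F.card = k) :
    ((((Finset.univ : Finset (Equiv.Perm (Fin m))).filter
        (fun ς => ∀ i ∉ F, ς i = i)).card : ℝ)⁻¹ *
      ∑ ς ∈ (Finset.univ : Finset (Equiv.Perm (Fin m))).filter (fun ς => ∀ i ∉ F, ς i = i),
        Matrix.trace ((1 - permMat m ς)ᵀ * (1 - permMat m ς) * K)
      = (1 / (k : ℝ)) * ∑ p ∈ F.offDiag, (K p.1 p.1 + K p.2 p.2 - 2 * K p.1 p.2)) ∧
    (∀ (d : ℕ) (x : Fin m → EuclideanSpace ℝ (Fin d)),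
      (∀ i i', K i i' = (inner ℝ (x i) (x i') : ℝ)) →
      ((((Finset.univ : Finset (Equiv.Perm (Fin m))).filter
          (fun ς => ∀ i ∉ F, ς i = i)).card : ℝ)⁻¹ *
        ∑ ς ∈ (Finset.univ : Finset (Equiv.Perm (Fin m))).filter (fun ς => ∀ i ∉ F, ς i = i),
          Matrix.trace ((1 - permMat m ς)ᵀ * (1 - permMat m ς) * K)
        = (1 / (k : ℝ)) * ∑ p ∈ F.offDiag, ‖x p.1 - x p.2‖ ^ 2)) := by
  subst hkcard
  simp only [filter_forall_notMem_apply_eq_eq_permsOfFinset, card_perms_of_finset,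
    permMat_eq_permMatrix, inv_mul_eq_div, one_div_mul_eq_div]
  refine ⟨sum_permsOfFinset_trace_div_factorial K F, fun d x hx => ?_⟩
  rw [sum_permsOfFinset_trace_div_factorial K F]
  congr 1
  refine sum_congr rfl fun p _ => ?_
  rw [hx, hx, hx, real_inner_self_eq_norm_sq, real_inner_self_eq_norm_sq, norm_sub_sq_real]
  ring

/-- the expectation computation at the heart of Theorem 9 `thexpradcomp`.
Averaging `trace((I - M_ς)ᵀ (I - M_ς) K)` uniformly over the permutations `ς` fixing
everything outside a `k`-element set `F` gives
`(1/k) ∑_{(i,i') ∈ F×F, i≠i'} (K_{ii} + K_{i'i'} - 2 K_{ii'})`, which for a Gram matrix is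
`(1/k) ∑_{(i,i') ∈ F×F, i≠i'} ‖x_i - x_{i'}‖²`. -/
theorem stmt11 (m : ℕ) (hm : 1 ≤ m) (K : Matrix (Fin m) (Fin m) ℝ) (hK : K.IsSymm)
    (F : Finset (Fin m)) (k : ℕ) (hkcard : F.card = k) (hk1 : 1 ≤ k) :
    ((((Finset.univ : Finset (Equiv.Perm (Fin m))).filter
        (fun ς => ∀ i ∉ F, ς i = i)).card : ℝ)⁻¹ *
      ∑ ς ∈ (Finset.univ : Finset (Equiv.Perm (Fin m))).filter (fun ς => ∀ i ∉ F, ς i = i),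
        Matrix.trace ((1 - permMat m ς)ᵀ * (1 - permMat m ς) * K)
      = (1 / (k : ℝ)) * ∑ p ∈ F.offDiag, (K p.1 p.1 + K p.2 p.2 - 2 * K p.1 p.2)) ∧
    (∀ (d : ℕ) (x : Fin m → EuclideanSpace ℝ (Fin d)),
      (∀ i i', K i i' = (inner ℝ (x i) (x i') : ℝ)) →
      ((((Finset.univ : Finset (Equiv.Perm (Fin m))).filter
          (fun ς => ∀ i ∉ F, ς i = i)).card : ℝ)⁻¹ *
        ∑ ς ∈ (Finset.univ : Finset (Equiv.Perm (Fin m))).filter (fun ς => ∀ i ∉ F, ς i = i),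
          Matrix.trace ((1 - permMat m ς)ᵀ * (1 - permMat m ς) * K)
        = (1 / (k : ℝ)) * ∑ p ∈ F.offDiag, ‖x p.1 - x p.2‖ ^ 2)) :=
  stmt11_general m K F k hkcard
end

section
/- Let m ≥ 1 and a, b ∈ ℝ^m with var(a) > 0 and var(b) > 0, and let ς be the transposition of two distinct indices ℓ, ℓ' of Fin m. Writing b^ς for the vector with entries (b^ς)_i = b_{ς(i)}, one has var(b^ς) = var(b) and ρ(a, b^ς) − ρ(a, b) = −(1/(m·√(var(a)·var(b)))) · (a_ℓ − a_{ℓ'}) · (b_ℓ − b_{ℓ'}). In particular ρ(a, b^ς) < ρ(a, b) if and only if (a_ℓ − a_{ℓ'}) and (b_ℓ − b_{ℓ'}) have the same strict sign. -/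
/-- elementary-permutation correlation identity from the proof of Lemma 8
`lemperm` of the appendix. Swapping the values of `b` at two indices `ℓ, ℓ'` preserves the
variance and shifts the Pearson correlation with `a` by
`-(aℓ - aℓ')(bℓ - bℓ')/(m √(var a · var b))`; in particular it strictly decreases the
correlation iff `(aℓ - aℓ')` and `(bℓ - bℓ')` have the same strict sign. -/
theorem stmt17 (m : ℕ) (hm : 1 ≤ m) (a b : Fin m → ℝ)
    (hva : 0 < evar m a) (hvb : 0 < evar m b)
    (l l' : Fin m) (hll' : l ≠ l') :
    evar m (fun i => b (Equiv.swap l l' i)) = evar m b ∧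
    ecorr m a (fun i => b (Equiv.swap l l' i)) - ecorr m a b
      = -(1 / ((m : ℝ) * Real.sqrt (evar m a * evar m b))) * ((a l - a l') * (b l - b l')) ∧
    (ecorr m a (fun i => b (Equiv.swap l l' i)) < ecorr m a b ↔
      0 < (a l - a l') * (b l - b l')) := by
  set σ := Equiv.swap l l'
  have hm0 : (0:ℝ) < (m:ℝ) := by exact_mod_cast Nat.lt_of_lt_of_le Nat.zero_lt_one hm
  -- sums are permutation invariant
  have hsum : ∀ f : Fin m → ℝ, ∑ i, f (σ i) = ∑ i, f i := fun f => Equiv.sum_comp σ f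
  have hmean : emean m (fun i => b (σ i)) = emean m b := by
    unfold emean; rw [hsum b]
  have hvar : evar m (fun i => b (σ i)) = evar m b := by
    unfold evar ecov
    rw [hmean]
    congr 2
    exact hsum (fun i => b i * b i)
  -- the cross term
  have hcross : ∑ i, a i * b (σ i) = (∑ i, a i * b i) - (a l - a l') * (b l - b l') := by
    have hδ : ∑ i, (a i * b (σ i) - a i * b i)
        = ∑ i ∈ ({l, l'} : Finset (Fin m)), (a i * b (σ i) - a i * b i) := by
      refine (Finset.sum_subset (Finset.subset_univ _) ?_).symm
      intro i _ hi
      simp only [Finset.mem_insert, Finset.mem_singleton, not_or] at hi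
      rw [Equiv.swap_apply_of_ne_of_ne hi.1 hi.2]
      ring
    have hpair : ∑ i ∈ ({l, l'} : Finset (Fin m)), (a i * b (σ i) - a i * b i)
        = -((a l - a l') * (b l - b l')) := by
      rw [Finset.sum_pair hll']
      simp only [σ, Equiv.swap_apply_left, Equiv.swap_apply_right]
      ring
    have := hδ.trans hpair
    rw [Finset.sum_sub_distrib] at this
    linarith
  have hcov : ecov m a (fun i => b (σ i))
      = ecov m a b - (1 / (m:ℝ)) * ((a l - a l') * (b l - b l')) := by
    unfold ecov
    rw [hmean, hcross]
    ring
  refine ⟨hvar, ?_, ?_⟩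
  · have hs : 0 < Real.sqrt (evar m a * evar m b) :=
      Real.sqrt_pos.2 (mul_pos hva hvb)
    have hcorr : ecorr m a (fun i => b (σ i)) - ecorr m a b
        = -(1 / ((m : ℝ) * Real.sqrt (evar m a * evar m b))) * ((a l - a l') * (b l - b l')) := by
      unfold ecorr
      rw [hvar, hcov]
      field_simp
      ring
    exact hcorr
  · have hs : 0 < Real.sqrt (evar m a * evar m b) :=
      Real.sqrt_pos.2 (mul_pos hva hvb)
    have hcorr : ecorr m a (fun i => b (σ i)) - ecorr m a b
        = -(1 / ((m : ℝ) * Real.sqrt (evar m a * evar m b))) * ((a l - a l') * (b l - b l')) := by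
      unfold ecorr
      rw [hvar, hcov]
      field_simp
      ring
    constructor
    · intro h
      have h' : ecorr m a (fun i => b (σ i)) - ecorr m a b < 0 := by linarith
      rw [hcorr] at h'
      have hc : 0 < 1 / ((m : ℝ) * Real.sqrt (evar m a * evar m b)) := by positivity
      nlinarith [hc]
    · intro h
      have : -(1 / ((m : ℝ) * Real.sqrt (evar m a * evar m b))) * ((a l - a l') * (b l - b l')) < 0 := by
        have hms : 0 < (m:ℝ) * Real.sqrt (evar m a * evar m b) := mul_pos hm0 hs
        have : 0 < 1 / ((m : ℝ) * Real.sqrt (evar m a * evar m b)) := by positivity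
        nlinarith
      linarith [hcorr ▸ this]
end

section
/- Let m ≥ 1, let y : Fin m → {−1, 1} be labels with both classes nonempty, and let a, b ∈ ℝ^m be two data columns. Let m₊ := #{i | y_i = 1}, p := m₊/m, and for s ∈ {+, −} let μ^s(a) be the mean of a over the class {i | y_i = s1} (similarly for b). If cov(a, b) > p(1 − p) · (μ⁺(a) − μ⁻(a)) · (μ⁺(b) − μ⁻(b)), then there exist distinct indices ℓ, ℓ' with y_ℓ = y_{ℓ'} such that, letting ς be the transposition of ℓ and ℓ' and b^ς the vector with entries b_{ς(i)}, one has cov(a, b^ς) < cov(a, b); equivalently, when var(a) > 0 and var(b) > 0, ρ(a, b^ς) < ρ(a, b). -/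
/-- Mean of the column `z` over the class of indices with label `s`. -/
noncomputable def classMean (m : ℕ) (y : Fin m → ℝ) (s : ℝ) (z : Fin m → ℝ) : ℝ :=
  (((Finset.univ : Finset (Fin m)).filter (fun i => y i = s)).card : ℝ)⁻¹ *
    ∑ i ∈ (Finset.univ : Finset (Fin m)).filter (fun i => y i = s), z i

lemma within_bound {n : ℕ} (P : Finset (Fin n)) (a b : Fin n → ℝ)
    (h : ∀ i ∈ P, ∀ j ∈ P, (a i - a j) * (b i - b j) ≤ 0) :
    (P.card : ℝ) * ∑ i ∈ P, a i * b i ≤ (∑ i ∈ P, a i) * (∑ i ∈ P, b i) := by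
  have key : ∑ i ∈ P, ∑ j ∈ P, (a i - a j) * (b i - b j) ≤ 0 :=
    Finset.sum_nonpos fun i hi => Finset.sum_nonpos fun j hj => h i hi j hj
  have expand : ∑ i ∈ P, ∑ j ∈ P, (a i - a j) * (b i - b j)
      = 2 * ((P.card : ℝ) * ∑ i ∈ P, a i * b i - (∑ i ∈ P, a i) * (∑ i ∈ P, b i)) := by
    have h1 : ∀ i ∈ P, ∑ j ∈ P, (a i - a j) * (b i - b j)
        = (P.card : ℝ) * (a i * b i) - a i * (∑ j ∈ P, b j) - (∑ j ∈ P, a j) * b i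
          + ∑ j ∈ P, a j * b j := by
      intro i _
      have h2 : ∀ j ∈ P, (a i - a j) * (b i - b j)
          = a i * b i - a i * b j - a j * b i + a j * b j := fun j _ => by ring
      rw [Finset.sum_congr rfl h2]
      simp [Finset.sum_add_distrib, Finset.sum_sub_distrib, ← Finset.mul_sum,
        ← Finset.sum_mul, Finset.sum_const, nsmul_eq_mul]
    rw [Finset.sum_congr rfl h1]
    simp [Finset.sum_add_distrib, Finset.sum_sub_distrib, ← Finset.mul_sum,
      ← Finset.sum_mul, Finset.sum_const, nsmul_eq_mul]
    ring
  linarith [expand ▸ key]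

lemma arith (Mp Mn Sp Sn Ap An Bp Bn : ℝ) (hMp : 0 < Mp) (hMn : 0 < Mn)
    (hP : Mp * Sp ≤ Ap * Bp) (hN : Mn * Sn ≤ An * Bn) :
    (1/(Mp+Mn)) * (Sp + Sn) - ((1/(Mp+Mn))*(Ap+An)) * ((1/(Mp+Mn))*(Bp+Bn))
      ≤ (Mp/(Mp+Mn)) * (1 - Mp/(Mp+Mn)) * (Mp⁻¹*Ap - Mn⁻¹*An) * (Mp⁻¹*Bp - Mn⁻¹*Bn) := by
  have hM : 0 < Mp + Mn := by linarith
  rw [← sub_nonneg]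
  have hiden : (Mp/(Mp+Mn)) * (1 - Mp/(Mp+Mn)) * (Mp⁻¹*Ap - Mn⁻¹*An) * (Mp⁻¹*Bp - Mn⁻¹*Bn)
      - ((1/(Mp+Mn)) * (Sp + Sn) - ((1/(Mp+Mn))*(Ap+An)) * ((1/(Mp+Mn))*(Bp+Bn)))
      = (Mn*(Mp+Mn)*(Ap*Bp - Mp*Sp) + Mp*(Mp+Mn)*(An*Bn - Mn*Sn)) / ((Mp+Mn)^2*Mp*Mn) := by
    field_simp
    ring
  rw [hiden]
  apply div_nonneg
  · have t1 : 0 ≤ Mn*(Mp+Mn)*(Ap*Bp - Mp*Sp) := mul_nonneg (by positivity) (by linarith)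
    have t2 : 0 ≤ Mp*(Mp+Mn)*(An*Bn - Mn*Sn) := mul_nonneg (by positivity) (by linarith)
    linarith
  · positivity

lemma swap_sum {n : ℕ} (a b : Fin n → ℝ) (l l' : Fin n) (hne : l ≠ l') :
    ∑ i, a i * b (Equiv.swap l l' i)
      = (∑ i, a i * b i) - (a l - a l') * (b l - b l') := by
  have h1 : ∑ i, (a i * b (Equiv.swap l l' i) - a i * b i)
      = ∑ i ∈ ({l, l'} : Finset (Fin n)), (a i * b (Equiv.swap l l' i) - a i * b i) := by
    refine (Finset.sum_subset (Finset.subset_univ _) ?_).symm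
    intro x _ hx
    simp only [Finset.mem_insert, Finset.mem_singleton, not_or] at hx
    rw [Equiv.swap_apply_of_ne_of_ne hx.1 hx.2, sub_self]
  rw [Finset.sum_sub_distrib, Finset.sum_pair hne, Equiv.swap_apply_left,
    Equiv.swap_apply_right] at h1
  linarith [h1]

/-- Lemma 8 `lemperm` of the appendix. If
`cov(a,b) > p(1-p)(μ⁺(a)-μ⁻(a))(μ⁺(b)-μ⁻(b))`, then some block-class transposition of the
shuffle column `b` strictly decreases the covariance with `a` (equivalently, when the
variances are positive, the Pearson correlation). -/
theorem stmt18 (m : ℕ) (hm : 1 ≤ m) (y : Fin m → ℝ) (hy : ∀ i, y i = 1 ∨ y i = -1)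
    (hpos : ∃ i, y i = 1) (hneg : ∃ i, y i = -1)
    (a b : Fin m → ℝ)
    (p : ℝ) (hp : p = (((Finset.univ : Finset (Fin m)).filter (fun i => y i = 1)).card : ℝ) / m)
    (hcov : p * (1 - p) * (classMean m y 1 a - classMean m y (-1) a) *
        (classMean m y 1 b - classMean m y (-1) b) < ecov m a b) :
    ∃ l l' : Fin m, l ≠ l' ∧ y l = y l' ∧
      ecov m a (fun i => b (Equiv.swap l l' i)) < ecov m a b ∧
      (0 < evar m a → 0 < evar m b →
        ecorr m a (fun i => b (Equiv.swap l l' i)) < ecorr m a b) := by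
  classical
  have hm0 : (0:ℝ) < m := by exact_mod_cast hm
  -- key existence of a good pair
  have hkey : ∃ l l' : Fin m, l ≠ l' ∧ y l = y l' ∧ 0 < (a l - a l') * (b l - b l') := by
    by_contra hcon
    push_neg at hcon
    set P := (Finset.univ : Finset (Fin m)).filter (fun i => y i = 1) with hPdef
    set N := (Finset.univ : Finset (Fin m)).filter (fun i => y i = -1) with hNdef
    have hNalt : (Finset.univ : Finset (Fin m)).filter (fun i => ¬ y i = 1) = N := by
      ext i
      simp only [hNdef, Finset.mem_filter, Finset.mem_univ, true_and]
      rcases hy i with h | h <;> simp [h] <;> norm_num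
    have hsplit : ∀ f : Fin m → ℝ, ∑ i, f i = ∑ i ∈ P, f i + ∑ i ∈ N, f i := by
      intro f
      rw [← Finset.sum_filter_add_sum_filter_not Finset.univ (fun i => y i = 1) f, hNalt]
    have hcard : P.card + N.card = m := by
      have := Finset.card_filter_add_card_filter_not
        (s := (Finset.univ : Finset (Fin m))) (p := fun i => y i = 1)
      rw [hNalt] at this
      simpa using this
    obtain ⟨i0, hi0⟩ := hpos
    obtain ⟨j0, hj0⟩ := hneg
    have hMp : 0 < (P.card : ℝ) := by
      have : i0 ∈ P := by simp [hPdef, hi0]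
      exact_mod_cast Finset.card_pos.mpr ⟨i0, this⟩
    have hMn : 0 < (N.card : ℝ) := by
      have : j0 ∈ N := by simp [hNdef, hj0]
      exact_mod_cast Finset.card_pos.mpr ⟨j0, this⟩
    have hsame : ∀ (s : ℝ) (Q : Finset (Fin m)),
        Q = (Finset.univ : Finset (Fin m)).filter (fun i => y i = s) →
        (Q.card : ℝ) * ∑ i ∈ Q, a i * b i ≤ (∑ i ∈ Q, a i) * (∑ i ∈ Q, b i) := by
      intro s Q hQ
      apply within_bound
      intro i hi j hj
      rcases eq_or_ne i j with rfl | hij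
      · simp
      · have hyi : y i = s := by rw [hQ] at hi; simpa using hi
        have hyj : y j = s := by rw [hQ] at hj; simpa using hj
        exact hcon i j hij (hyi.trans hyj.symm)
    have hPb := hsame 1 P hPdef
    have hNb := hsame (-1) N hNdef
    have hmcast : (m : ℝ) = (P.card : ℝ) + (N.card : ℝ) := by exact_mod_cast hcard.symm
    have harith := arith (P.card : ℝ) (N.card : ℝ)
      (∑ i ∈ P, a i * b i) (∑ i ∈ N, a i * b i)
      (∑ i ∈ P, a i) (∑ i ∈ N, a i) (∑ i ∈ P, b i) (∑ i ∈ N, b i)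
      hMp hMn hPb hNb
    have hcov' : ecov m a b ≤ p * (1 - p) * (classMean m y 1 a - classMean m y (-1) a) *
        (classMean m y 1 b - classMean m y (-1) b) := by
      unfold ecov emean classMean
      rw [hsplit (fun i => a i * b i), hsplit a, hsplit b, hp, hmcast]
      rw [← hPdef, ← hNdef]
      rw [div_eq_mul_inv, ← div_eq_mul_inv] at harith ⊢
      convert harith using 2 <;> ring
    linarith
  obtain ⟨l, l', hne, hyy, hprod⟩ := hkey
  have hswap : ecov m a (fun i => b (Equiv.swap l l' i))
      = ecov m a b - (1 / (m:ℝ)) * ((a l - a l') * (b l - b l')) := by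
    unfold ecov emean
    rw [swap_sum a b l l' hne]
    have hmean : ∑ i, b (Equiv.swap l l' i) = ∑ i, b i := Equiv.sum_comp _ b
    rw [hmean]
    ring
  have hlt : ecov m a (fun i => b (Equiv.swap l l' i)) < ecov m a b := by
    rw [hswap]
    have : 0 < (1 / (m:ℝ)) * ((a l - a l') * (b l - b l')) :=
      mul_pos (by positivity) hprod
    linarith
  refine ⟨l, l', hne, hyy, hlt, ?_⟩
  intro hva hvb
  have hvar : evar m (fun i => b (Equiv.swap l l' i)) = evar m b := by
    unfold evar ecov emean
    have h1 : ∑ i, (fun i => b (Equiv.swap l l' i)) i * (fun i => b (Equiv.swap l l' i)) i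
        = ∑ i, b i * b i := Equiv.sum_comp _ (fun i => b i * b i)
    have h2 : ∑ i, (fun i => b (Equiv.swap l l' i)) i = ∑ i, b i := Equiv.sum_comp _ b
    rw [h1, h2]
  unfold ecorr
  rw [hvar]
  exact div_lt_div_of_pos_right hlt (Real.sqrt_pos.mpr (mul_pos hva hvb))
end
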